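/- Let N1, N2, N3 ≥ 1, r ∈ ℕ, and let C be a third-order tensor of size N1 × N2 × N3 with entries in ℂ. There exist tensors X of size N1 × r × N3 and Y of size r × N2 × N3 with C = X ∗ Y (t-product) if and only if for every frequency k : ZMod N3 the N1 × N2 complex matrix C̆ₖ with entries (C̆ₖ)(i,j) = (dft C(i,j))(k) has rank at most r. (In particular, a tensor has tubal-rank at most r exactly when every frontal slice of its Fourier-domain tensor has matrix rank at most r.) -/

import Mathlib

open scoped BigOperators

/-- Circular convolution of two tubes of length `n`. -/
noncomputable def cconv {n : ℕ} [NeZero n] (a b : ZMod n → ℂ) : ZMod n → ℂ :=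
  fun t => ∑ s : ZMod n, a s * b (t - s)

/-- Discrete Fourier transform of a tube of length `n`. -/
noncomputable def dft {n : ℕ} [NeZero n] (a : ZMod n → ℂ) : ZMod n → ℂ :=
  fun k => ∑ t : ZMod n,
    a t * Complex.exp (-2 * (Real.pi : ℂ) * Complex.I * ((k.val : ℂ) * (t.val : ℂ)) / (n : ℂ))

/-- t-product of third-order tensors. -/
noncomputable def tProduct {N1 N2 N3 N4 : ℕ} [NeZero N3]
    (A : Fin N1 → Fin N2 → ZMod N3 → ℂ) (B : Fin N2 → Fin N4 → ZMod N3 → ℂ) :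
    Fin N1 → Fin N4 → ZMod N3 → ℂ :=
  fun i j => ∑ l : Fin N2, cconv (A i l) (B l j)

/-
The DFT diagonalises circular convolution, so in the Fourier domain the t-product becomes the
ordinary matrix product of the frontal slices, independently at every frequency. Hence `C`
factors through inner dimension `r` iff every Fourier slice of `C` factors through `Fin r`,
i.e. has rank at most `r`; the factors of the slices are reassembled by the inverse DFT.
-/

open scoped ZMod

section RankFactorization

variable {K V W : Type*} [Field K] [AddCommGroup V] [Module K V] [AddCommGroup W] [Module K W]

theorem LinearMap.exists_comp_eq_of_finrank_range_le (f : V →ₗ[K] W)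
    [FiniteDimensional K (LinearMap.range f)] {r : ℕ}
    (hr : Module.finrank K (LinearMap.range f) ≤ r) :
    ∃ (g : V →ₗ[K] Fin r → K) (h : (Fin r → K) →ₗ[K] W), h ∘ₗ g = f := by
  set U := LinearMap.range f
  let p : (Fin r → K) →ₗ[K] U :=
    ((Module.finBasis K U).equivFun.symm : (Fin _ → K) →ₗ[K] U) ∘ₗ
      LinearMap.funLeft K K (Fin.castLE hr)
  have hp : Function.Surjective p :=
    (Module.finBasis K U).equivFun.symm.surjective.comp
      (LinearMap.funLeft_surjective_of_injective _ _ _ (Fin.castLE_injective hr))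
  obtain ⟨g, hg⟩ := Module.projective_lifting_property p f.rangeRestrict hp
  refine ⟨g, U.subtype ∘ₗ p, ?_⟩
  rw [LinearMap.comp_assoc, hg, LinearMap.subtype_comp_codRestrict]

theorem Matrix.rank_le_iff_exists_eq_mul {m n : Type*} [Fintype n] (M : Matrix m n K) (r : ℕ) :
    M.rank ≤ r ↔ ∃ (A : Matrix m (Fin r) K) (B : Matrix (Fin r) n K), M = A * B := by
  classical
  constructor
  · intro hr
    obtain ⟨g, h, hgh⟩ := M.mulVecLin.exists_comp_eq_of_finrank_range_le hr
    refine ⟨LinearMap.toMatrix' h, LinearMap.toMatrix' g, ?_⟩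
    rw [← LinearMap.toMatrix'_comp, hgh, ← Matrix.toLin'_apply', LinearMap.toMatrix'_toLin']
  · rintro ⟨A, B, rfl⟩
    calc (A * B).rank ≤ A.rank := Matrix.rank_mul_le_left A B
      _ ≤ Fintype.card (Fin r) := Matrix.rank_le_card_width A
      _ = r := Fintype.card_fin r

end RankFactorization

theorem dft_eq_zmod_dft {n : ℕ} [NeZero n] (a : ZMod n → ℂ) : dft a = 𝓕 a := by
  funext k
  refine Finset.sum_congr rfl fun t _ => ?_
  have hchar : -(t * k) = ((-(t.val * k.val : ℤ) : ℤ) : ZMod n) := by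
    push_cast
    rw [ZMod.natCast_zmod_val, ZMod.natCast_zmod_val]
  rw [smul_eq_mul, mul_comm, hchar, ZMod.stdAddChar_coe]
  congr 2
  push_cast
  ring

theorem ZMod.dft_cconv {n : ℕ} [NeZero n] (a b : ZMod n → ℂ) :
    𝓕 (cconv a b) = 𝓕 a * 𝓕 b := by
  funext k
  rw [Pi.mul_apply, ZMod.dft_apply, ZMod.dft_apply, ZMod.dft_apply, Finset.sum_mul_sum]
  simp only [cconv, smul_eq_mul, Finset.mul_sum]
  rw [Finset.sum_comm]
  refine Finset.sum_congr rfl fun s _ => ?_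
  rw [← Equiv.sum_comp (Equiv.addLeft s)
    (fun t => ZMod.stdAddChar (-(t * k)) * (a s * b (t - s)))]
  refine Finset.sum_congr rfl fun u _ => ?_
  have hchar : ZMod.stdAddChar (-((s + u) * k))
      = ZMod.stdAddChar (-(s * k)) * ZMod.stdAddChar (-(u * k)) := by
    rw [← AddChar.map_add_eq_mul, add_mul, neg_add]
  simp only [Equiv.coe_addLeft, add_sub_cancel_left, hchar]
  ring

section FourierSlices

variable {N1 N2 N3 N4 : ℕ} [NeZero N3]

/-- The matrix `C̆ₖ` of the Fourier-domain tensor. -/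
noncomputable def fourierSlice (A : Fin N1 → Fin N2 → ZMod N3 → ℂ) (k : ZMod N3) :
    Matrix (Fin N1) (Fin N2) ℂ :=
  Matrix.of fun i j => 𝓕 (A i j) k

noncomputable def ofFourierSlices (M : ZMod N3 → Matrix (Fin N1) (Fin N2) ℂ) :
    Fin N1 → Fin N2 → ZMod N3 → ℂ :=
  fun i j => 𝓕⁻ fun k => M k i j

theorem fourierSlice_ofFourierSlices (M : ZMod N3 → Matrix (Fin N1) (Fin N2) ℂ) :
    fourierSlice (ofFourierSlices M) = M := by
  funext k
  ext i j
  simp [fourierSlice, ofFourierSlices]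

theorem fourierSlice_injective :
    Function.Injective (fourierSlice : (Fin N1 → Fin N2 → ZMod N3 → ℂ) → _) := by
  intro A B hAB
  funext i j
  exact ZMod.dft.injective <| funext fun k => congrFun (congrFun (congrFun hAB k) i) j

theorem fourierSlice_tProduct (A : Fin N1 → Fin N2 → ZMod N3 → ℂ)
    (B : Fin N2 → Fin N4 → ZMod N3 → ℂ) (k : ZMod N3) :
    fourierSlice (tProduct A B) k = fourierSlice A k * fourierSlice B k := by
  ext i j
  simp [fourierSlice, tProduct, Matrix.mul_apply, ZMod.dft_cconv]

end FourierSlices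

theorem stmt2_general (N1 N2 N3 : ℕ) [NeZero N3]
    (r : ℕ) (C : Fin N1 → Fin N2 → ZMod N3 → ℂ) :
    (∃ (X : Fin N1 → Fin r → ZMod N3 → ℂ) (Y : Fin r → Fin N2 → ZMod N3 → ℂ),
        C = tProduct X Y) ↔
      ∀ k : ZMod N3, (Matrix.of fun i j => dft (C i j) k).rank ≤ r := by
  have hslice : ∀ k, (Matrix.of fun i j => dft (C i j) k) = fourierSlice C k := fun k => by
    simp only [dft_eq_zmod_dft, fourierSlice]
  simp only [hslice, Matrix.rank_le_iff_exists_eq_mul]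
  constructor
  · rintro ⟨X, Y, rfl⟩ k
    exact ⟨fourierSlice X k, fourierSlice Y k, fourierSlice_tProduct X Y k⟩
  · intro h
    choose A B hAB using h
    refine ⟨ofFourierSlices A, ofFourierSlices B, fourierSlice_injective ?_⟩
    funext k
    rw [fourierSlice_tProduct, fourierSlice_ofFourierSlices, fourierSlice_ofFourierSlices, hAB]

/-- a tensor factors as a t-product with inner dimension `r` iff every
frontal slice of its Fourier-domain tensor has matrix rank at most `r`. -/
theorem stmt2 (N1 N2 N3 : ℕ) [NeZero N3] (hN1 : 1 ≤ N1) (hN2 : 1 ≤ N2) (hN3 : 1 ≤ N3)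
    (r : ℕ) (C : Fin N1 → Fin N2 → ZMod N3 → ℂ) :
    (∃ (X : Fin N1 → Fin r → ZMod N3 → ℂ) (Y : Fin r → Fin N2 → ZMod N3 → ℂ),
        C = tProduct X Y) ↔
      ∀ k : ZMod N3, (Matrix.of fun i j => dft (C i j) k).rank ≤ r :=
  stmt2_general N1 N2 N3 r C
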